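/- Let N ≥ 1 and let â : ℝ^N → ℝ be a nonnegative function that is rotationally symmetric (â(k) = â(k') whenever ‖k‖ = ‖k'‖) and such that k ↦ exp(−â(k)) is a Schwartz function on ℝ^N. Suppose that for every t > 0 there exists a continuous integrable function G_t : ℝ^N → ℂ with 𝓕G_t(k) = exp(−â(k)·t) for all k ∈ ℝ^N. Then there is NO constant c₀ > 0 such that for every t > 0 the support of G_t is contained in the closed ball of radius c₀·t centered at the origin. (In other words, the fundamental solution of a real-valued, translation- and rotation-invariant strongly continuous semigroup cannot satisfy the causality condition.) -/

import Mathlib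

open MeasureTheory
open scoped RealInnerProductSpace

/-- The Fourier transform `𝓕f(k) = (2π)^{-N/2} ∫ e^{i k·x} f(x) dx` used in the paper. -/
noncomputable def paperFourier {N : ℕ} (f : EuclideanSpace ℝ (Fin N) → ℂ)
    (k : EuclideanSpace ℝ (Fin N)) : ℂ :=
  (((2 * Real.pi) ^ (-(N : ℝ) / 2) : ℝ) : ℂ) *
    ∫ x : EuclideanSpace ℝ (Fin N), Complex.exp (Complex.I * (⟪k, x⟫ : ℝ)) * f x

/-!
Restricting `𝓕 G_t` to a line `ℝ e` through the origin and complexifying the frequency, the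
support condition makes each `E_t(z) = 𝓕 G_t(z e)` an entire function of exponential type, with
`E_t(s) = exp (-â(s e) t)` for real `s`. By the identity theorem `E_{1/n} ^ n = E_1`, so a zero of
`E_1` would have order divisible by every `n`: `E_1` has no zeros. A zero-free entire function of
exponential type is `exp (a + b z)` (take a logarithm, then Borel–Carathéodory and Liouville), so
`s ↦ â(s e)` is affine; rotation invariance makes it even, hence constant. Then `exp (-â)` is a
nonzero constant, which is not a Schwartz function.
-/

open Complex Filter Metric
open scoped Topology

theorem norm_cexp_mul_mul_le {z w a : ℂ} {r : ℝ} (hw : a ≠ 0 → ‖w‖ ≤ r) :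
    ‖cexp (z * w) * a‖ ≤ Real.exp (r * ‖z‖) * ‖a‖ := by
  rcases eq_or_ne a 0 with rfl | ha
  · simp
  rw [norm_mul, norm_exp]
  gcongr
  calc (z * w).re ≤ ‖z * w‖ := re_le_norm _
    _ = ‖w‖ * ‖z‖ := by rw [norm_mul, mul_comm]
    _ ≤ r * ‖z‖ := by gcongr; exact hw ha

section ExpIntegral

variable {X : Type*} [MeasurableSpace X] {μ : Measure X} {f w : X → ℂ} {r : ℝ}

theorem norm_integral_cexp_mul_mul_le (hf : Integrable f μ) (hsupp : ∀ x, f x ≠ 0 → ‖w x‖ ≤ r)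
    (z : ℂ) :
    ‖∫ x, cexp (z * w x) * f x ∂μ‖ ≤ Real.exp (r * ‖z‖) * ∫ x, ‖f x‖ ∂μ := by
  rw [← integral_const_mul]
  exact norm_integral_le_of_norm_le (hf.norm.const_mul _)
    (ae_of_all _ fun x => norm_cexp_mul_mul_le (hsupp x))

theorem integrable_cexp_mul_mul (hf : Integrable f μ) (hw : AEStronglyMeasurable w μ)
    (hsupp : ∀ x, f x ≠ 0 → ‖w x‖ ≤ r) (z : ℂ) :
    Integrable (fun x => cexp (z * w x) * f x) μ :=
  (hf.norm.const_mul _).mono'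
    ((continuous_exp.comp_aestronglyMeasurable (hw.const_mul z)).mul hf.aestronglyMeasurable)
    (ae_of_all _ fun x => norm_cexp_mul_mul_le (hsupp x))

theorem differentiable_integral_cexp_mul_mul (hf : Integrable f μ) (hw : AEStronglyMeasurable w μ)
    (hsupp : ∀ x, f x ≠ 0 → ‖w x‖ ≤ r) :
    Differentiable ℂ fun z => ∫ x, cexp (z * w x) * f x ∂μ := by
  intro z₀
  refine (hasDerivAt_integral_of_dominated_loc_of_deriv_le (ball_mem_nhds z₀ one_pos)
    (bound := fun x => Real.exp (r * (‖z₀‖ + 1)) * (r * ‖f x‖))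
    (F' := fun z x => cexp (z * w x) * (w x * f x))
    (Eventually.of_forall (fun z => (integrable_cexp_mul_mul hf hw hsupp z).aestronglyMeasurable))
    (integrable_cexp_mul_mul hf hw hsupp z₀)
    ((continuous_exp.comp_aestronglyMeasurable (hw.const_mul z₀)).mul
      (hw.mul hf.aestronglyMeasurable))
    ?_ ((hf.norm.const_mul r).const_mul _) ?_).2.differentiableAt
  · refine ae_of_all _ fun x z hz => ?_
    rcases eq_or_ne (f x) 0 with hx | hx
    · simp [hx]
    have hr : 0 ≤ r := (norm_nonneg _).trans (hsupp x hx)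
    have hz : ‖z‖ ≤ ‖z₀‖ + 1 := by
      have := norm_le_norm_add_norm_sub' z z₀
      rw [← dist_eq_norm] at this
      linarith [mem_ball.1 hz]
    calc ‖cexp (z * w x) * (w x * f x)‖ ≤ Real.exp (r * ‖z‖) * ‖w x * f x‖ :=
          norm_cexp_mul_mul_le fun h => hsupp x (right_ne_zero_of_mul h)
      _ ≤ Real.exp (r * (‖z₀‖ + 1)) * (r * ‖f x‖) := by
          rw [norm_mul]
          gcongr
          exact hsupp x hx
  · refine ae_of_all _ fun x z _ => ?_
    have : HasDerivAt (fun z => z * w x) (1 * w x) z := (hasDerivAt_id z).mul_const (w x)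
    simpa [mul_assoc] using this.cexp.mul_const (f x)

end ExpIntegral

namespace Complex

theorem Differentiable.eq_of_forall_ofReal_eq {f g : ℂ → ℂ} (hf : Differentiable ℂ f)
    (hg : Differentiable ℂ g) (hfg : ∀ s : ℝ, f s = g s) : f = g := by
  have hreal : Tendsto ((↑) : ℝ → ℂ) (𝓝[≠] 0) (𝓝[≠] 0) :=
    tendsto_nhdsWithin_of_tendsto_nhds_of_eventually_within _
      (by simpa using continuous_ofReal.tendsto' 0 0 ofReal_zero |>.mono_left nhdsWithin_le_nhds)
      (eventually_nhdsWithin_of_forall fun s hs => by simpa using hs)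
  funext z
  exact AnalyticOnNhd.eqOn_of_preconnected_of_frequently_eq (fun w _ => hf.analyticAt w)
    (fun w _ => hg.analyticAt w) isPreconnected_univ (Set.mem_univ 0)
    (hreal.frequently (Frequently.of_forall hfg)) (Set.mem_univ z)

theorem Differentiable.ne_zero_of_forall_exists_pow_eq {f : ℂ → ℂ} (hf : Differentiable ℂ f)
    (hf0 : f ≠ 0) (hroots : ∀ n : ℕ, ∃ q : ℂ → ℂ, Differentiable ℂ q ∧ q ^ (n + 1) = f)
    (w : ℂ) : f w ≠ 0 := by
  intro hw
  have hfin : analyticOrderAt f w ≠ ⊤ :=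
    fun h => hf0 ((AnalyticOnNhd.analyticOrderAt_eq_top_iff_eq_zero w hf.analyticAt).1 h)
  obtain ⟨m, hm⟩ := ENat.ne_top_iff_exists.1 hfin
  obtain ⟨q, hq, rfl⟩ := hroots m
  have hqw : analyticOrderAt q w ≠ 0 := by
    refine (hq.analyticAt w).analyticOrderAt_ne_zero.2 ?_
    simpa using hw
  have := analyticOrderAt_pow (hq.analyticAt w) (m + 1)
  have hle : ((m + 1 : ℕ) : ℕ∞) ≤ (m + 1) • analyticOrderAt q w := by
    simpa using nsmul_le_nsmul_right (Order.one_le_iff_ne_zero.2 hqw) (m + 1)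
  rw [← this, ← hm] at hle
  norm_cast at hle
  omega

theorem Differentiable.exists_cexp_eq {f : ℂ → ℂ} (hf : Differentiable ℂ f)
    (hne : ∀ z, f z ≠ 0) : ∃ h : ℂ → ℂ, Differentiable ℂ h ∧ ∀ z, cexp (h z) = f z := by
  obtain ⟨h, h0, hh⟩ := ((hf.deriv).div hf hne).isExactOn_univ.with_val_at 0 (log (f 0))
  refine ⟨h, fun z => (hh z trivial).differentiableAt, fun z => ?_⟩
  have hderiv : ∀ z, HasDerivAt (fun z => f z * cexp (-h z)) 0 z := by
    intro z
    have hexp : HasDerivAt (fun z => cexp (-h z)) (cexp (-h z) * -(deriv f z / f z)) z :=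
      (hh z trivial).neg.cexp
    have hprod : HasDerivAt (fun z => f z * cexp (-h z))
        (deriv f z * cexp (-h z) + f z * (cexp (-h z) * -(deriv f z / f z))) z :=
      (hf z).hasDerivAt.mul hexp
    convert hprod using 1
    field_simp [hne z]
    ring
  have := is_const_of_deriv_eq_zero (fun z => (hderiv z).differentiableAt)
    (fun z => (hderiv z).deriv) z 0
  simp only [h0, exp_neg, exp_log (hne 0), mul_inv_cancel₀ (hne 0)] at this
  rw [mul_inv_eq_one₀ (exp_ne_zero _)] at this
  exact this.symm

theorem Differentiable.exists_norm_le_of_re_le {h : ℂ → ℂ} (hd : Differentiable ℂ h) {α β : ℝ}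
    (hre : ∀ z, (h z).re ≤ α + β * ‖z‖) : ∃ C D : ℝ, ∀ z, ‖h z‖ ≤ C + D * ‖z‖ := by
  refine ⟨2 * (|α| + |β| + 1) + 3 * ‖h 0‖, 4 * |β|, fun z => ?_⟩
  set R := 2 * ‖z‖ + 1
  set M := |α| + |β| * R + 1
  have hR : 0 < R := by positivity
  have hM : 0 < M := by positivity
  have hz : z ∈ ball (0 : ℂ) R := by rw [mem_ball_zero_iff]; linarith [norm_nonneg z]
  have hmaps : Set.MapsTo h (ball 0 R) {w | w.re ≤ M} := by
    intro w hw
    have hβ : β * ‖w‖ ≤ |β| * R := by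
      calc β * ‖w‖ ≤ |β| * ‖w‖ := by gcongr; exact le_abs_self β
        _ ≤ |β| * R := by gcongr; exact (mem_ball_zero_iff.1 hw).le
    simp only [Set.mem_ofPred_eq]
    linarith [hre w, le_abs_self α]
  have hbc := borelCaratheodory hM hd.differentiableOn hmaps hR hz
  rw [show R - ‖z‖ = ‖z‖ + 1 by ring] at hbc
  have hMterm : 2 * M * ‖z‖ / (‖z‖ + 1) ≤ 2 * M := by
    rw [div_le_iff₀ (by positivity)]; nlinarith [norm_nonneg z]
  have h0term : ‖h 0‖ * (R + ‖z‖) / (‖z‖ + 1) ≤ 3 * ‖h 0‖ := by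
    rw [div_le_iff₀ (by positivity)]; nlinarith [norm_nonneg z, norm_nonneg (h 0)]
  nlinarith [abs_nonneg β]

theorem Differentiable.exists_eq_add_mul_of_norm_le {h : ℂ → ℂ} (hd : Differentiable ℂ h)
    {C D : ℝ} (hb : ∀ z, ‖h z‖ ≤ C + D * ‖z‖) : ∃ a b : ℂ, ∀ z, h z = a + b * z := by
  have hderiv : ∀ w, ‖deriv h w‖ ≤ |C| + 2 * |D| := by
    intro w
    set R := ‖w‖ + 1
    have hR : 0 < R := by positivity
    have hsphere : ∀ x ∈ sphere w R, ‖h x‖ ≤ |C| + |D| * (2 * R) := by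
      intro x hx
      have : ‖x‖ ≤ 2 * R := by
        have := norm_le_norm_add_norm_sub' x w
        rw [← dist_eq_norm, mem_sphere.1 hx] at this
        linarith
      calc ‖h x‖ ≤ C + D * ‖x‖ := hb x
        _ ≤ |C| + |D| * ‖x‖ := by gcongr <;> exact le_abs_self _
        _ ≤ |C| + |D| * (2 * R) := by gcongr
    calc ‖deriv h w‖ ≤ (|C| + |D| * (2 * R)) / R :=
          norm_deriv_le_of_forall_mem_sphere_norm_le hR hd.diffContOnCl hsphere
      _ ≤ |C| + 2 * |D| := by
          rw [div_le_iff₀ hR]; nlinarith [abs_nonneg C, norm_nonneg w]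
  have hconst : ∀ w, deriv h w = deriv h 0 := fun w =>
    hd.deriv.apply_eq_apply_of_bounded
      (isBounded_iff_forall_norm_le.2 ⟨_, Set.forall_mem_range.2 hderiv⟩) w 0
  refine ⟨h 0, deriv h 0, fun z => ?_⟩
  have hlin : ∀ w, HasDerivAt (fun w => h w - deriv h 0 * w) 0 w := fun w => by
    have : HasDerivAt (fun w => h w - deriv h 0 * w) (deriv h w - deriv h 0 * 1) w :=
      (hd w).hasDerivAt.sub ((hasDerivAt_id w).const_mul (deriv h 0))
    rwa [hconst w, mul_one, sub_self] at this
  have := is_const_of_deriv_eq_zero (fun w => (hlin w).differentiableAt)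
    (fun w => (hlin w).deriv) z 0
  simp only [mul_zero, sub_zero] at this
  linear_combination this

theorem Differentiable.exists_eq_cexp_add_mul {f : ℂ → ℂ} (hf : Differentiable ℂ f)
    (hne : ∀ z, f z ≠ 0) {A β : ℝ} (hbound : ∀ z, ‖f z‖ ≤ A * Real.exp (β * ‖z‖)) :
    ∃ a b : ℂ, ∀ z, f z = cexp (a + b * z) := by
  obtain ⟨h, hd, hh⟩ := hf.exists_cexp_eq hne
  have hre : ∀ z, (h z).re ≤ A + β * ‖z‖ := fun z => by
    rw [← Real.exp_le_exp, ← norm_exp, hh, Real.exp_add]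
    exact (hbound z).trans (by gcongr; linarith [Real.add_one_le_exp A])
  obtain ⟨C, D, hCD⟩ := hd.exists_norm_le_of_re_le hre
  obtain ⟨a, b, hab⟩ := hd.exists_eq_add_mul_of_norm_le hCD
  exact ⟨a, b, fun z => by rw [← hh, hab]⟩

end Complex

theorem SchwartzMap.eq_zero_of_forall_eq {E F : Type*} [NormedAddCommGroup E] [NormedSpace ℝ E]
    [Nontrivial E] [NormedAddCommGroup F] [NormedSpace ℝ F] (φ : SchwartzMap E F) {c : F}
    (h : ∀ x, φ x = c) : c = 0 := by
  by_contra hc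
  obtain ⟨C, -, hC⟩ := φ.decay 1 0
  obtain ⟨x, hx⟩ := exists_norm_eq E (by positivity : 0 ≤ (|C| + 1) / ‖c‖)
  have := hC x
  rw [norm_iteratedFDeriv_zero, h, pow_one, hx, div_mul_cancel₀ _ (norm_ne_zero_iff.2 hc)] at this
  linarith [le_abs_self C]

section FourierOnLine

variable {N : ℕ} {f : EuclideanSpace ℝ (Fin N) → ℂ} {r : ℝ}

noncomputable def fourierOnLine (f : EuclideanSpace ℝ (Fin N) → ℂ) (v : EuclideanSpace ℝ (Fin N))
    (z : ℂ) : ℂ :=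
  (((2 * Real.pi) ^ (-(N : ℝ) / 2) : ℝ) : ℂ) *
    ∫ x : EuclideanSpace ℝ (Fin N), cexp (z * (I * (⟪v, x⟫ : ℝ))) * f x

theorem paperFourier_smul (f : EuclideanSpace ℝ (Fin N) → ℂ) (v : EuclideanSpace ℝ (Fin N))
    (s : ℝ) : paperFourier f (s • v) = fourierOnLine f v s := by
  simp only [paperFourier, fourierOnLine, real_inner_smul_left, ofReal_mul]
  congr 2 with x
  ring_nf

theorem norm_I_mul_inner_le (hsupp : ∀ x, f x ≠ 0 → ‖x‖ ≤ r) (v : EuclideanSpace ℝ (Fin N))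
    (x : EuclideanSpace ℝ (Fin N)) (hx : f x ≠ 0) : ‖I * (⟪v, x⟫ : ℝ)‖ ≤ ‖v‖ * r := by
  rw [norm_mul, norm_I, one_mul, norm_real]
  exact (norm_inner_le_norm v x).trans (by gcongr; exact hsupp x hx)

theorem differentiable_fourierOnLine (hf : Integrable f) (hsupp : ∀ x, f x ≠ 0 → ‖x‖ ≤ r)
    (v : EuclideanSpace ℝ (Fin N)) : Differentiable ℂ (fourierOnLine f v) :=
  (differentiable_integral_cexp_mul_mul hf (by fun_prop)
    (norm_I_mul_inner_le hsupp v)).const_mul _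

theorem norm_fourierOnLine_le (hf : Integrable f) (hsupp : ∀ x, f x ≠ 0 → ‖x‖ ≤ r)
    (v : EuclideanSpace ℝ (Fin N)) (z : ℂ) :
    ‖fourierOnLine f v z‖ ≤
      (2 * Real.pi) ^ (-(N : ℝ) / 2) * (∫ x, ‖f x‖) * Real.exp (‖v‖ * r * ‖z‖) := by
  rw [fourierOnLine, norm_mul, norm_real, Real.norm_of_nonneg (by positivity), mul_assoc]
  gcongr
  rw [mul_comm]
  exact norm_integral_cexp_mul_mul_le hf (norm_I_mul_inner_le hsupp v) z

end FourierOnLine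

theorem exists_eq_add_mul_of_forall_ofReal_eq_cexp {E : ℝ → ℂ → ℂ} {β : ℝ → ℝ}
    (hE : ∀ t, 0 < t → Differentiable ℂ (E t))
    (hreal : ∀ t, 0 < t → ∀ s : ℝ, E t s = cexp (-(β s * t))) {A c : ℝ}
    (hbound : ∀ z, ‖E 1 z‖ ≤ A * Real.exp (c * ‖z‖)) :
    ∃ a b : ℝ, ∀ s, β s = a + b * s := by
  have hroots : ∀ n : ℕ, ∃ q, Differentiable ℂ q ∧ q ^ (n + 1) = E 1 := fun n => by
    have ht : (0 : ℝ) < 1 / (n + 1) := by positivity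
    refine ⟨E (1 / (n + 1)), hE _ ht, ((hE _ ht).pow _).eq_of_forall_ofReal_eq (hE 1 one_pos) ?_⟩
    intro s
    simp only [Pi.pow_apply, hreal _ ht, hreal 1 one_pos, ← exp_nat_mul]
    push_cast
    field_simp
  have hE0 : E 1 ≠ 0 := fun h => by
    have := hreal 1 one_pos 0
    rw [ofReal_zero, congrFun h 0] at this
    exact exp_ne_zero _ this.symm
  obtain ⟨a, b, hab⟩ := (hE 1 one_pos).exists_eq_cexp_add_mul
    ((hE 1 one_pos).ne_zero_of_forall_exists_pow_eq hE0 hroots) hbound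
  refine ⟨-a.re, -b.re, fun s => ?_⟩
  have := congrArg (‖·‖) ((hreal 1 one_pos s).symm.trans (hab s))
  simp only [norm_exp, neg_re, mul_one, ofReal_re, add_re, re_mul_ofReal, Real.exp_eq_exp] at this
  linarith

theorem stmt_3 (N : ℕ) (hN : 1 ≤ N) (ahat : EuclideanSpace ℝ (Fin N) → ℝ)
    (hrot : ∀ k k' : EuclideanSpace ℝ (Fin N), ‖k‖ = ‖k'‖ → ahat k = ahat k')
    (hschwartz : ∃ φ : SchwartzMap (EuclideanSpace ℝ (Fin N)) ℝ,
      ∀ k, φ k = Real.exp (-ahat k))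
    (G : ℝ → EuclideanSpace ℝ (Fin N) → ℂ)
    (hGi : ∀ t : ℝ, 0 < t → Integrable (G t))
    (hGft : ∀ t : ℝ, 0 < t → ∀ k : EuclideanSpace ℝ (Fin N),
      paperFourier (G t) k = Complex.exp (-(ahat k * t))) :
    ¬ ∃ c₀ : ℝ, 0 < c₀ ∧ ∀ t : ℝ, 0 < t →
      tsupport (G t) ⊆ Metric.closedBall (0 : EuclideanSpace ℝ (Fin N)) (c₀ * t) := by
  rintro ⟨c₀, -, hsupp⟩
  obtain ⟨φ, hφ⟩ := hschwartz
  have : Nonempty (Fin N) := ⟨⟨0, hN⟩⟩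
  obtain ⟨e, he⟩ := exists_norm_eq (EuclideanSpace ℝ (Fin N)) zero_le_one
  have hsupp' : ∀ t, 0 < t → ∀ x, G t x ≠ 0 → ‖x‖ ≤ c₀ * t := fun t ht x hx => by
    simpa using hsupp t ht (subset_tsupport _ hx)
  obtain ⟨a, b, hab⟩ := exists_eq_add_mul_of_forall_ofReal_eq_cexp (β := fun s => ahat (s • e))
    (fun t ht => differentiable_fourierOnLine (hGi t ht) (hsupp' t ht) e)
    (fun t ht s => by rw [← hGft t ht, paperFourier_smul])
    (norm_fourierOnLine_le (hGi 1 one_pos) (hsupp' 1 one_pos) e)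
  have hb : b = 0 := by
    have h1 := hab 1
    have h2 := hab (-1)
    rw [hrot ((-1 : ℝ) • e) ((1 : ℝ) • e) (by simp)] at h2
    linarith
  have hconst : ∀ k, φ k = Real.exp (-a) := fun k => by
    rw [hφ, hrot k (‖k‖ • e) (by simp [norm_smul, he]), hab, hb, zero_mul, add_zero]
  exact (Real.exp_pos _).ne' (φ.eq_zero_of_forall_eq hconst)
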